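/- Let H be a minimally 2-connected simple graph and let (P_1, …, P_h) be a greedy open ear decomposition of H. Let P_i and P_j be ears with j < i such that either both P_i and P_j have exactly two edges or both have exactly three edges. Then no endpoint of P_i is an internal vertex of P_j. -/

import Mathlib

open SimpleGraph

/-- `G` is `k`-connected: it has more than `k` vertices and deleting any set of
fewer than `k` vertices leaves a connected graph. -/
def KConnected {V : Type*} (k : ℕ) (G : SimpleGraph V) : Prop :=
  k < Nat.card V ∧
    ∀ S : Set V, S.Finite → S.ncard < k → (G.induce Sᶜ).Connected

/-- `H` is minimally 2-connected: it is 2-connected, but deleting any edge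
destroys 2-connectedness. -/
def MinimallyTwoConnected {V : Type*} (H : SimpleGraph V) : Prop :=
  KConnected 2 H ∧ ∀ e ∈ H.edgeSet, ¬ KConnected 2 (H.deleteEdges {e})

/-- The subgraph `H_k = P₁ ∪ ⋯ ∪ P_k` formed by the first `k` ears
(the ears with indices `0, …, k-1`). -/
def earPrefix {V : Type*} {H : SimpleGraph V} {h : ℕ} {s t : Fin (h + 1) → V}
    (ear : (i : Fin (h + 1)) → H.Walk (s i) (t i)) (k : ℕ) : H.Subgraph :=
  ⨆ i : Fin (h + 1), if (i : ℕ) < k then (ear i).toSubgraph else ⊥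

/-- An open ear decomposition `(P₁, …, P_{h+1})` of `H` (indexed here by
`Fin (h+1)`): the ears partition the edge set of `H`, the first ear is a cycle,
and every later ear is a path with two distinct endpoints meeting the union of
the previous ears exactly in its endpoints. -/
structure OpenEarDecomp {V : Type*} (H : SimpleGraph V) (h : ℕ) where
  /-- first endpoints of the ears -/
  s : Fin (h + 1) → V
  /-- second endpoints of the ears -/
  t : Fin (h + 1) → V
  /-- the ears, as walks in `H` -/
  ear : (i : Fin (h + 1)) → H.Walk (s i) (t i)
  /-- the first ear is closed -/
  first_closed : s 0 = t 0
  /-- the first ear is a cycle -/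
  first_cycle : ((ear 0).copy rfl first_closed.symm).IsCycle
  /-- every later ear is a path -/
  ears_path : ∀ i : Fin (h + 1), 0 < (i : ℕ) → (ear i).IsPath
  /-- every later ear has two distinct endpoints -/
  ends_ne : ∀ i : Fin (h + 1), 0 < (i : ℕ) → s i ≠ t i
  /-- the endpoints of a later ear lie in the union of the previous ears -/
  ends_mem : ∀ i : Fin (h + 1), 0 < (i : ℕ) →
    s i ∈ (earPrefix ear i).verts ∧ t i ∈ (earPrefix ear i).verts
  /-- a later ear meets the union of the previous ears only in its endpoints -/
  internal_disjoint : ∀ i : Fin (h + 1), 0 < (i : ℕ) →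
    ∀ x ∈ (ear i).support, x ∈ (earPrefix ear i).verts → x = s i ∨ x = t i
  /-- distinct ears are edge-disjoint -/
  edge_disjoint : ∀ i j : Fin (h + 1), i ≠ j →
    ∀ e ∈ (ear i).edges, e ∉ (ear j).edges
  /-- the ears cover all edges of `H` -/
  edges_cover : ∀ e ∈ H.edgeSet, ∃ i : Fin (h + 1), e ∈ (ear i).edges

/-- An ear decomposition is *greedy* if at every step the longest possible ear
is added: the first ear is a longest cycle of `H`, and no admissible ear is
longer than the ear actually added. -/
def OpenEarDecomp.Greedy {V : Type*} {H : SimpleGraph V} {h : ℕ}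
    (D : OpenEarDecomp H h) : Prop :=
  (∀ (v : V) (w : H.Walk v v), w.IsCycle → w.length ≤ (D.ear 0).length) ∧
  (∀ i : Fin (h + 1), 0 < (i : ℕ) →
    ∀ (u v : V) (q : H.Walk u v), q.IsPath → u ≠ v →
      u ∈ (earPrefix D.ear i).verts → v ∈ (earPrefix D.ear i).verts →
      (∀ x ∈ q.support, x ∈ (earPrefix D.ear i).verts → x = u ∨ x = v) →
      (∀ e ∈ q.edges, e ∉ (earPrefix D.ear i).edgeSet) →
      q.length ≤ (D.ear i).length)

/-! Let `q` be an admissible ear at a later step whose endpoints are both present after ear `P_k`.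
If one of them first appears inside `P_k`, splicing `q` into the pieces of `P_k` gives an
admissible ear at step `k` strictly longer than `q`; otherwise `q` itself is admissible at step
`k`. So in a greedy decomposition every ear with an endpoint inside an ear `P_j` other than the
first is strictly shorter than `P_j`. If `P_j` is the first ear, it is a cycle with at most three
edges, hence a triangle, and a later ear pulls back to a path joining two adjacent vertices of
that triangle, which closes up to a cycle longer than the triangle; so no later ear has three
edges. -/

namespace SimpleGraph.Walk

variable {V : Type*} {H : SimpleGraph V} {a b c u v w : V}

lemma IsPath.append_of_support_inter {p : H.Walk a b} {q : H.Walk b c} (hp : p.IsPath)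
    (hq : q.IsPath) (hpq : ∀ z ∈ p.support, z ∈ q.support → z = b) :
    (p.append q).IsPath := by
  obtain ⟨hb, htail⟩ : b ∉ q.support.tail ∧ q.support.tail.Nodup := by
    rw [← List.nodup_cons, cons_tail_support]
    exact hq.support_nodup
  rw [isPath_def, support_append]
  exact hp.support_nodup.append htail fun z hzp hzq =>
    hb (hpq z hzp ((mem_support_iff q).2 (.inr hzq)) ▸ hzq)

lemma IsPath.eq_of_mem_takeUntil_of_mem_dropUntil [DecidableEq V] {p : H.Walk a b}
    (hp : p.IsPath) (hw : w ∈ p.support) {z : V} (h₁ : z ∈ (p.takeUntil w hw).support)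
    (h₂ : z ∈ (p.dropUntil w hw).support) : z = w := by
  by_contra hzw
  refine IsPath.ne_of_mem_support_of_append (p := p.takeUntil w hw) (q := p.dropUntil w hw)
    ?_ hzw h₁ h₂ rfl
  rwa [take_spec]

lemma IsCycle.mk_mem_edges_of_length_eq_three {C : H.Walk a a} (hC : C.IsCycle)
    (h3 : C.length = 3) (hu : u ∈ C.support) (hv : v ∈ C.support) (huv : u ≠ v) :
    s(u, v) ∈ C.edges := by
  rcases C with _ | ⟨_, _ | ⟨_, _ | ⟨_, _ | ⟨_, _⟩⟩⟩⟩
  all_goals simp only [length_cons, length_nil] at h3; try omega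
  have hnd := hC.support_nodup
  simp only [support_cons, support_nil, List.tail_cons, List.nodup_cons, List.mem_cons,
    List.not_mem_nil, or_false, List.nodup_nil, and_true, not_or] at hnd
  simp only [support_cons, support_nil, List.mem_cons, List.not_mem_nil, or_false] at hu hv
  simp only [edges_cons, edges_nil, List.mem_cons, List.not_mem_nil, or_false, Sym2.eq_iff]
  rcases hu with rfl | rfl | rfl | rfl <;> rcases hv with rfl | rfl | rfl | rfl <;> tauto

lemma length_pos_of_ne (p : H.Walk a b) (h : a ≠ b) : 0 < p.length :=
  not_nil_iff_lt_length.1 (not_nil_of_ne h)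

lemma mem_dropUntil_or_mem_dropUntil [DecidableEq V] (p : H.Walk a b) (hu : u ∈ p.support)
    (hv : v ∈ p.support) (huv : u ≠ v) :
    v ∈ (p.dropUntil u hu).support ∨ u ∈ (p.dropUntil v hv).support := by
  refine or_iff_not_imp_left.2 fun hvR => ?_
  have hvT : v ∈ (p.takeUntil u hu).support := by
    have := hv
    rw [← take_spec p hu, mem_support_append_iff] at this
    exact this.resolve_right hvR
  have hu' := hu
  rw [← take_spec p hv, mem_support_append_iff] at hu'
  exact hu'.resolve_left (notMem_support_takeUntil_support_takeUntil_subset huv.symm hu hvT)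

lemma toSubgraph_copy {a' b' : V} (p : H.Walk a b) (ha : a = a') (hb : b = b') :
    (p.copy ha hb).toSubgraph = p.toSubgraph := by
  subst ha hb
  rfl

structure IsInternallyDisjoint (q : H.Walk u v) (G : H.Subgraph) : Prop where
  isPath : q.IsPath
  eq_of_mem_verts : ∀ z ∈ q.support, z ∈ G.verts → z = u ∨ z = v
  edges_notMem : ∀ e ∈ q.edges, e ∉ G.edgeSet

/-- The admissible ears of the condition `OpenEarDecomp.Greedy`. -/
structure IsEarOf (q : H.Walk u v) (G : H.Subgraph) : Prop
    extends IsInternallyDisjoint q G where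
  ne : u ≠ v
  start_mem : u ∈ G.verts
  end_mem : v ∈ G.verts

variable {G K : H.Subgraph}

lemma mem_sup_toSubgraph_verts_iff {p : H.Walk a b} {z : V} :
    z ∈ (G ⊔ p.toSubgraph).verts ↔ z ∈ G.verts ∨ z ∈ p.support := by
  simp [Subgraph.verts_sup]

namespace IsInternallyDisjoint

lemma anti {q : H.Walk u v} (hq : q.IsInternallyDisjoint K) (hGK : G ≤ K) :
    q.IsInternallyDisjoint G where
  isPath := hq.isPath
  eq_of_mem_verts z hz hzG := hq.eq_of_mem_verts z hz (hGK.1 hzG)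
  edges_notMem e he heG := hq.edges_notMem e he (Subgraph.edgeSet_mono hGK heG)

lemma reverse {q : H.Walk u v} (hq : q.IsInternallyDisjoint G) :
    q.reverse.IsInternallyDisjoint G where
  isPath := hq.isPath.reverse
  eq_of_mem_verts z hz hzG := (hq.eq_of_mem_verts z (by simpa using hz) hzG).symm
  edges_notMem e he := hq.edges_notMem e (by simpa using he)

lemma takeUntil [DecidableEq V] {q : H.Walk u v} (hq : q.IsInternallyDisjoint G)
    (hw : w ∈ q.support) : (q.takeUntil w hw).IsInternallyDisjoint G where
  isPath := hq.isPath.takeUntil hw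
  eq_of_mem_verts z hz hzG := by
    refine (hq.eq_of_mem_verts z (q.support_takeUntil_subset_support hw hz) hzG).imp_right ?_
    rintro rfl
    exact hq.isPath.eq_of_mem_takeUntil_of_mem_dropUntil hw hz (end_mem_support _)
  edges_notMem e he := hq.edges_notMem e (q.edges_takeUntil_subset_edges hw he)

lemma dropUntil [DecidableEq V] {q : H.Walk u v} (hq : q.IsInternallyDisjoint G)
    (hw : w ∈ q.support) : (q.dropUntil w hw).IsInternallyDisjoint G where
  isPath := hq.isPath.dropUntil hw
  eq_of_mem_verts z hz hzG := by
    refine (hq.eq_of_mem_verts z (q.support_dropUntil_subset_support hw hz) hzG).imp_left ?_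
    rintro rfl
    exact hq.isPath.eq_of_mem_takeUntil_of_mem_dropUntil hw (start_mem_support _) hz
  edges_notMem e he := hq.edges_notMem e (q.edges_dropUntil_subset_edges hw he)

lemma append {p : H.Walk a b} {q : H.Walk b c} (hp : p.IsInternallyDisjoint G)
    (hq : q.IsInternallyDisjoint G) (hb : b ∉ G.verts)
    (hpq : ∀ z ∈ p.support, z ∈ q.support → z = b) :
    (p.append q).IsInternallyDisjoint G where
  isPath := hp.isPath.append_of_support_inter hq.isPath hpq
  eq_of_mem_verts z hz hzG := by
    rcases (mem_support_append_iff p q).1 hz with hz | hz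
    · exact .inl ((hp.eq_of_mem_verts z hz hzG).resolve_right (by rintro rfl; exact hb hzG))
    · exact .inr ((hq.eq_of_mem_verts z hz hzG).resolve_left (by rintro rfl; exact hb hzG))
  edges_notMem e he := by
    rw [edges_append, List.mem_append] at he
    exact he.elim (hp.edges_notMem e) (hq.edges_notMem e)

lemma append_isEarOf {e x y : V} {S : H.Walk e x} {q : H.Walk x y}
    (hS : S.IsInternallyDisjoint G) (hGK : G ≤ K) (hSK : ∀ z ∈ S.support, z ∈ K.verts)
    (he : e ∈ G.verts) (hx : x ∉ G.verts) (hy : y ∈ G.verts) (hey : e ≠ y)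
    (hq : q.IsEarOf K) : (S.append q).IsEarOf G where
  toIsInternallyDisjoint := hS.append (hq.anti hGK) hx fun z hzS hzq => by
    refine (hq.eq_of_mem_verts z hzq (hSK z hzS)).resolve_right ?_
    rintro rfl
    rcases hS.eq_of_mem_verts z hzS hy with rfl | rfl
    exacts [hey rfl, hx hy]
  ne := hey
  start_mem := he
  end_mem := hy

lemma append_append_isEarOf {s x y t : V} {A : H.Walk s x} {q : H.Walk x y} {C : H.Walk y t}
    (hA : A.IsInternallyDisjoint G) (hC : C.IsInternallyDisjoint G) (hGK : G ≤ K)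
    (hAK : ∀ z ∈ A.support, z ∈ K.verts) (hCK : ∀ z ∈ C.support, z ∈ K.verts)
    (hAC : A.support.Disjoint C.support) (hs : s ∈ G.verts) (ht : t ∈ G.verts) (hst : s ≠ t)
    (hx : x ∉ G.verts) (hy : y ∉ G.verts) (hq : q.IsEarOf K) :
    ((A.append q).append C).IsEarOf G where
  toIsInternallyDisjoint := by
    have hAq : (A.append q).IsInternallyDisjoint G :=
      hA.append (hq.anti hGK) hx fun z hzA hzq =>
        (hq.eq_of_mem_verts z hzq (hAK z hzA)).resolve_right
          (by rintro rfl; exact hAC hzA C.start_mem_support)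
    refine hAq.append hC hy fun z hz hzC => ?_
    rcases (mem_support_append_iff A q).1 hz with hzA | hzq
    · exact absurd hzC (hAC hzA)
    · exact (hq.eq_of_mem_verts z hzq (hCK z hzC)).resolve_left
        (by rintro rfl; exact hAC A.end_mem_support hzC)
  ne := hst
  start_mem := hs
  end_mem := ht

end IsInternallyDisjoint

namespace IsEarOf

lemma anti {q : H.Walk u v} (hq : q.IsEarOf K) (hGK : G ≤ K) (hu : u ∈ G.verts)
    (hv : v ∈ G.verts) : q.IsEarOf G :=
  { hq.toIsInternallyDisjoint.anti hGK with ne := hq.ne, start_mem := hu, end_mem := hv }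

lemma reverse {q : H.Walk u v} (hq : q.IsEarOf G) : q.reverse.IsEarOf G :=
  { hq.toIsInternallyDisjoint.reverse with
    ne := hq.ne.symm, start_mem := hq.end_mem, end_mem := hq.start_mem }

variable [DecidableEq V] {s t : V} {P : H.Walk s t}

lemma exists_isEarOf_length_lt_of_sup_of_end_mem (hP : P.IsEarOf G) {q : H.Walk u v}
    (hq : q.IsEarOf (G ⊔ P.toSubgraph)) (hu : u ∉ G.verts) (hv : v ∈ G.verts) :
    ∃ (a b : V) (q' : H.Walk a b), q'.IsEarOf G ∧ q.length < q'.length := by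
  have huP := (mem_sup_toSubgraph_verts_iff.1 hq.start_mem).resolve_left hu
  by_cases hvs : v = s
  · refine ⟨t, v, _, (hP.dropUntil huP).reverse.append_isEarOf le_sup_left
      (fun z hz => mem_sup_toSubgraph_verts_iff.2
        (.inr (P.support_dropUntil_subset_support huP (by simpa using hz))))
      hP.end_mem hu hv (hvs ▸ hP.ne.symm) hq, ?_⟩
    have := (P.dropUntil u huP).length_pos_of_ne fun h => hu (h ▸ hP.end_mem)
    simp only [length_append, length_reverse]
    omega
  · refine ⟨s, v, _, (hP.takeUntil huP).append_isEarOf le_sup_left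
      (fun z hz => mem_sup_toSubgraph_verts_iff.2
        (.inr (P.support_takeUntil_subset_support huP hz)))
      hP.start_mem hu hv (Ne.symm hvs) hq, ?_⟩
    have := (P.takeUntil u huP).length_pos_of_ne fun h => hu (h ▸ hP.start_mem)
    rw [length_append]
    omega

lemma exists_isEarOf_length_lt_of_sup_of_notMem (hP : P.IsEarOf G) {q : H.Walk u v}
    (hq : q.IsEarOf (G ⊔ P.toSubgraph)) (hu : u ∉ G.verts) (hv : v ∉ G.verts) :
    ∃ (a b : V) (q' : H.Walk a b), q'.IsEarOf G ∧ q.length < q'.length := by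
  have huP := (mem_sup_toSubgraph_verts_iff.1 hq.start_mem).resolve_left hu
  have hvP := (mem_sup_toSubgraph_verts_iff.1 hq.end_mem).resolve_left hv
  wlog hvR : v ∈ (P.dropUntil u huP).support generalizing u v
  · have huR := (P.mem_dropUntil_or_mem_dropUntil huP hvP hq.ne).resolve_left hvR
    simpa using this hq.reverse hv hu hvP huP huR
  have hR := hP.dropUntil huP
  refine ⟨s, t, _, (hP.takeUntil huP).append_append_isEarOf (hR.dropUntil hvR) le_sup_left
    (fun z hz => mem_sup_toSubgraph_verts_iff.2
      (.inr (P.support_takeUntil_subset_support huP hz)))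
    (fun z hz => mem_sup_toSubgraph_verts_iff.2
      (.inr (P.support_dropUntil_subset_support huP (support_dropUntil_subset_support _ hvR hz))))
    (fun z hzT hzC => ?_) hP.start_mem hP.end_mem hP.ne hu hv hq, ?_⟩
  · obtain rfl := hP.isPath.eq_of_mem_takeUntil_of_mem_dropUntil huP hzT
      (support_dropUntil_subset_support _ hvR hzC)
    exact hq.ne (hR.isPath.eq_of_mem_takeUntil_of_mem_dropUntil hvR (start_mem_support _) hzC)
  · have := (P.takeUntil u huP).length_pos_of_ne fun h => hu (h ▸ hP.start_mem)
    have := ((P.dropUntil u huP).dropUntil v hvR).length_pos_of_ne fun h => hv (h ▸ hP.end_mem)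
    simp only [length_append]
    omega

lemma exists_isEarOf_length_lt_of_sup (hP : P.IsEarOf G) {q : H.Walk u v}
    (hq : q.IsEarOf (G ⊔ P.toSubgraph)) (hnew : u ∉ G.verts ∨ v ∉ G.verts) :
    ∃ (a b : V) (q' : H.Walk a b), q'.IsEarOf G ∧ q.length < q'.length := by
  wlog hu : u ∉ G.verts generalizing u v
  · simpa using this hq.reverse hnew.symm (hnew.resolve_left hu)
  by_cases hv : v ∈ G.verts
  · exact hP.exists_isEarOf_length_lt_of_sup_of_end_mem hq hu hv
  · exact hP.exists_isEarOf_length_lt_of_sup_of_notMem hq hu hv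

lemma exists_isEarOf_length_le_of_sup (hP : P.IsEarOf G) {q : H.Walk u v}
    (hq : q.IsEarOf (G ⊔ P.toSubgraph)) :
    ∃ (a b : V) (q' : H.Walk a b), q'.IsEarOf G ∧ q.length ≤ q'.length := by
  by_cases hold : u ∈ G.verts ∧ v ∈ G.verts
  · exact ⟨u, v, q, hq.anti le_sup_left hold.1 hold.2, le_rfl⟩
  · obtain ⟨a, b, q', hq', hlt⟩ := hP.exists_isEarOf_length_lt_of_sup hq (not_and_or.1 hold)
    exact ⟨a, b, q', hq', hlt.le⟩

end IsEarOf

lemma IsCycle.exists_isCycle_of_isEarOf_of_length_eq_three {C : H.Walk a a} (hC : C.IsCycle)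
    (h3 : C.length = 3) {q : H.Walk u v} (hq : q.IsEarOf C.toSubgraph) :
    ∃ c : H.Walk v v, c.IsCycle ∧ c.length = q.length + 1 := by
  have hvu := hC.mk_mem_edges_of_length_eq_three h3 (by simpa using hq.end_mem)
    (by simpa using hq.start_mem) hq.ne.symm
  refine ⟨cons (C.adj_of_mem_edges hvu) q,
    (cons_isCycle_iff q _).2 ⟨hq.isPath, fun h => ?_⟩, rfl⟩
  exact hq.edges_notMem _ h ((mem_edges_toSubgraph C).2 hvu)

end SimpleGraph.Walk

section EarPrefix

variable {V : Type*} {H : SimpleGraph V} {h : ℕ} {s t : Fin (h + 1) → V}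
  (ear : (i : Fin (h + 1)) → H.Walk (s i) (t i))

lemma earPrefix_mono : Monotone (earPrefix ear) := fun k l hkl =>
  iSup_mono fun i => by split_ifs <;> first | exact le_rfl | exact bot_le | omega

lemma earPrefix_zero : earPrefix ear 0 = ⊥ := by
  simp [earPrefix]

lemma earPrefix_succ (k : Fin (h + 1)) :
    earPrefix ear (k + 1) = earPrefix ear k ⊔ (ear k).toSubgraph := by
  refine le_antisymm (iSup_le fun i => ?_) (sup_le (earPrefix_mono ear k.val.le_succ) ?_)
  · split_ifs with hi
    · rcases Nat.lt_succ_iff_lt_or_eq.1 hi with hik | hik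
      · exact le_sup_of_le_left (le_iSup_of_le i (by rw [if_pos hik]))
      · exact le_sup_of_le_right (by rw [Fin.ext hik])
    · exact bot_le
  · exact le_iSup_of_le k (by rw [if_pos k.val.lt_succ_self])

lemma earPrefix_one : earPrefix ear 1 = (ear 0).toSubgraph := by
  simpa [earPrefix_zero] using earPrefix_succ ear 0

lemma mem_earPrefix_edgeSet {k : ℕ} {e : Sym2 V} :
    e ∈ (earPrefix ear k).edgeSet ↔
      ∃ i : Fin (h + 1), (i : ℕ) < k ∧ e ∈ (ear i).edges := by
  simp only [earPrefix, Subgraph.edgeSet_iSup, Set.mem_iUnion]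
  refine exists_congr fun i => ?_
  split_ifs with hi <;> simp [hi]

lemma exists_earPrefix_succ_of_notMem {j m : ℕ} (hm : m ≤ h + 1) {u v : V}
    (hu : u ∈ (earPrefix ear m).verts) (hv : v ∈ (earPrefix ear m).verts)
    (hnew : u ∉ (earPrefix ear j).verts ∨ v ∉ (earPrefix ear j).verts) :
    ∃ k : Fin (h + 1), j ≤ k ∧ (k : ℕ) < m ∧
      u ∈ (earPrefix ear (k + 1)).verts ∧ v ∈ (earPrefix ear (k + 1)).verts ∧
      (u ∉ (earPrefix ear k).verts ∨ v ∉ (earPrefix ear k).verts) := by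
  classical
  have hjm : j < m := by
    by_contra! hmj
    exact hnew.elim (· ((earPrefix_mono ear hmj).1 hu)) (· ((earPrefix_mono ear hmj).1 hv))
  have hwit :
      u ∈ (earPrefix ear (m - 1 + 1)).verts ∧ v ∈ (earPrefix ear (m - 1 + 1)).verts := by
    rw [Nat.sub_add_cancel (by omega)]
    exact ⟨hu, hv⟩
  have hex : ∃ n, u ∈ (earPrefix ear (n + 1)).verts ∧ v ∈ (earPrefix ear (n + 1)).verts :=
    ⟨m - 1, hwit⟩
  have hmin : Nat.find hex ≤ m - 1 := Nat.find_min' hex hwit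
  obtain ⟨hun, hvn⟩ := Nat.find_spec hex
  have hjn : j ≤ Nat.find hex := by
    by_contra! hnj
    exact hnew.elim (· ((earPrefix_mono ear hnj).1 hun)) (· ((earPrefix_mono ear hnj).1 hvn))
  refine ⟨⟨Nat.find hex, by omega⟩, hjn, by simp only; omega, hun, hvn, ?_⟩
  by_cases h0 : Nat.find hex = 0
  · simp [h0, earPrefix_zero]
  · have := Nat.find_min hex (show Nat.find hex - 1 < Nat.find hex by omega)
    rwa [Nat.sub_add_cancel (by omega), not_and_or] at this

end EarPrefix

namespace OpenEarDecomp

variable {V : Type*} {H : SimpleGraph V} {h : ℕ} {u v : V}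

lemma isEarOf_earPrefix (D : OpenEarDecomp H h) {i : Fin (h + 1)} (hi : 0 < (i : ℕ)) :
    (D.ear i).IsEarOf (earPrefix D.ear i) where
  isPath := D.ears_path i hi
  eq_of_mem_verts := D.internal_disjoint i hi
  edges_notMem e he he' := by
    obtain ⟨m, hmi, hem⟩ := (mem_earPrefix_edgeSet D.ear).1 he'
    exact D.edge_disjoint i m (fun him => by omega) e he hem
  ne := D.ends_ne i hi
  start_mem := (D.ends_mem i hi).1
  end_mem := (D.ends_mem i hi).2

lemma exists_isEarOf_earPrefix_length_le (D : OpenEarDecomp H h) {k m : ℕ} (hk : 0 < k)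
    (hkm : k ≤ m) (hm : m ≤ h + 1) {q : H.Walk u v} (hq : q.IsEarOf (earPrefix D.ear m)) :
    ∃ (a b : V) (q' : H.Walk a b), q'.IsEarOf (earPrefix D.ear k) ∧ q.length ≤ q'.length := by
  classical
  induction m, hkm using Nat.le_induction generalizing u v with
  | base => exact ⟨u, v, q, hq, le_rfl⟩
  | succ m hkm ih =>
    let M : Fin (h + 1) := ⟨m, by omega⟩
    have hM := D.isEarOf_earPrefix (i := M) (by simp only [M]; omega)
    obtain ⟨a, b, q', hq', hle⟩ := hM.exists_isEarOf_length_le_of_sup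
      (by rwa [← earPrefix_succ])
    obtain ⟨a', b', q'', hq'', hle'⟩ := ih (by omega) hq'
    exact ⟨a', b', q'', hq'', hle.trans hle'⟩

namespace Greedy

variable {D : OpenEarDecomp H h}

lemma length_le_of_isEarOf (hD : D.Greedy) {i : Fin (h + 1)} (hi : 0 < (i : ℕ))
    {q : H.Walk u v} (hq : q.IsEarOf (earPrefix D.ear i)) : q.length ≤ (D.ear i).length :=
  hD.2 i hi u v q hq.isPath hq.ne hq.start_mem hq.end_mem hq.eq_of_mem_verts hq.edges_notMem

lemma length_lt_of_notMem (hD : D.Greedy) {j : Fin (h + 1)} (hj : 0 < (j : ℕ)) {m : ℕ}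
    (hm : m ≤ h + 1) {q : H.Walk u v} (hq : q.IsEarOf (earPrefix D.ear m))
    (hnew : u ∉ (earPrefix D.ear j).verts ∨ v ∉ (earPrefix D.ear j).verts) :
    q.length < (D.ear j).length := by
  classical
  obtain ⟨k, hjk, hkm, huk, hvk, hnewk⟩ :=
    exists_earPrefix_succ_of_notMem D.ear hm hq.start_mem hq.end_mem hnew
  have hqk : q.IsEarOf (earPrefix D.ear (k + 1)) :=
    hq.anti (earPrefix_mono D.ear (by omega)) huk hvk
  rw [earPrefix_succ] at hqk
  obtain ⟨a, b, q', hq', hlt⟩ :=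
    (D.isEarOf_earPrefix (by omega)).exists_isEarOf_length_lt_of_sup hqk hnewk
  obtain ⟨a', b', q'', hq'', hle⟩ :=
    D.exists_isEarOf_earPrefix_length_le hj hjk (by omega) hq'
  exact hlt.trans_le (hle.trans (hD.length_le_of_isEarOf hj hq''))

lemma length_le_two_of_length_first_eq_three (hD : D.Greedy) (h3 : (D.ear 0).length = 3)
    {m : ℕ} (hm₁ : 1 ≤ m) (hm : m ≤ h + 1) {q : H.Walk u v}
    (hq : q.IsEarOf (earPrefix D.ear m)) : q.length ≤ 2 := by
  obtain ⟨a, b, q', hq', hle⟩ := D.exists_isEarOf_earPrefix_length_le one_pos hm₁ hm hq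
  rw [earPrefix_one, ← Walk.toSubgraph_copy _ rfl D.first_closed.symm] at hq'
  obtain ⟨c, hc, hclen⟩ :=
    D.first_cycle.exists_isCycle_of_isEarOf_of_length_eq_three (by simpa using h3) hq'
  have := hD.1 _ c hc
  omega

end Greedy

end OpenEarDecomp

theorem greedy_equal_short_ears_no_internal_endpoint_general {V : Type*}
    (H : SimpleGraph V) {h : ℕ}
    (D : OpenEarDecomp H h) (hD : D.Greedy)
    (i j : Fin (h + 1)) (hji : (j : ℕ) < (i : ℕ))
    (hlen : ((D.ear i).length = 2 ∧ (D.ear j).length = 2) ∨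
      ((D.ear i).length = 3 ∧ (D.ear j).length = 3)) :
    ∀ x, (x = D.s i ∨ x = D.t i) → x ∈ (D.ear j).support →
      x = D.s j ∨ x = D.t j := by
  intro x hx hxj
  by_contra hxint
  have hi : 0 < (i : ℕ) := by omega
  have hPi := D.isEarOf_earPrefix hi
  rcases Nat.eq_zero_or_pos j with hj | hj
  · obtain rfl : j = 0 := Fin.ext hj
    have h3 : 3 ≤ (D.ear 0).length := by simpa using D.first_cycle.three_le_length
    have := hD.length_le_two_of_length_first_eq_three (by omega) hi i.isLt.le hPi
    omega
  · have hxnew : x ∉ (earPrefix D.ear j).verts := fun hxG =>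
      hxint (D.internal_disjoint j hj x hxj hxG)
    have := hD.length_lt_of_notMem hj i.isLt.le hPi (by rcases hx with rfl | rfl <;> simp [hxnew])
    omega

/-- In a greedy open ear decomposition of a minimally 2-connected graph, if two
ears `P_j` and `P_i` with `j < i` both have exactly two edges or both have
exactly three edges, then no endpoint of `P_i` is an internal vertex of `P_j`. -/
theorem greedy_equal_short_ears_no_internal_endpoint {V : Type*}
    (H : SimpleGraph V) (hmin : MinimallyTwoConnected H) {h : ℕ}
    (D : OpenEarDecomp H h) (hD : D.Greedy)
    (i j : Fin (h + 1)) (hji : (j : ℕ) < (i : ℕ))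
    (hlen : ((D.ear i).length = 2 ∧ (D.ear j).length = 2) ∨
      ((D.ear i).length = 3 ∧ (D.ear j).length = 3)) :
    ∀ x, (x = D.s i ∨ x = D.t i) → x ∈ (D.ear j).support →
      x = D.s j ∨ x = D.t j :=
  greedy_equal_short_ears_no_internal_endpoint_general H D hD i j hji hlen
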